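/- If u is an OF-term (no non-variable subterm of its linearization unifies with a linearized left-hand side of R), then for every substitution γ, the instance uγ cannot be sub-rewritten at any non-variable position p ∈ FPos(u). -/

import Mathlib

/-- Finite first-order terms. -/
inductive Tm (F V : Type) : Type
  | var : V → Tm F V
  | app : F → List (Tm F V) → Tm F V

namespace Tm
variable {F V W : Type}

/-- Application of a substitution to a term. -/
def subst (σ : V → Tm F W) : Tm F V → Tm F W
  | .var x => σ x
  | .app f l => .app f (l.attach.map fun t => t.1.subst σ)
  decreasing_by simp only [Tm.app.sizeOf_spec]; have := List.sizeOf_lt_of_mem t.2; omega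

/-- Subterm of `t` at a position (a list of argument indices), if any. -/
def at? : Tm F V → List ℕ → Option (Tm F V)
  | t, [] => some t
  | .var _, _ :: _ => none
  | .app _ l, i :: p =>
    match l[i]? with
    | some t => t.at? p
    | none => none

mutual
/-- Linearization of a term: the occurrence of a variable `x` at position `p`
is renamed into the fresh variable `(x, p)`. -/
def lin : Tm F V → List ℕ → Tm F (V × List ℕ)
  | .var x, p => .var (x, p)
  | .app f l, p => .app f (linList l p 0)

def linList : List (Tm F V) → List ℕ → ℕ → List (Tm F (V × List ℕ))
  | [], _, _ => []
  | t :: ts, p, i => lin t (p ++ [i]) :: linList ts p (i + 1)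
end

/-- `x` occurs in `t`. -/
inductive HasVar (x : V) : Tm F V → Prop
  | var : HasVar x (.var x)
  | app {f l t} : t ∈ l → HasVar x t → HasVar x (.app f l)

/-- `t` is not a variable. -/
def NonVar (t : Tm F V) : Prop := ∀ z, t ≠ .var z

/-- Reflexive subterm relation. -/
inductive Sub : Tm F V → Tm F V → Prop
  | refl (t) : Sub t t
  | app {s t f l} : t ∈ l → Sub s t → Sub s (.app f l)


/-! ### Auxiliary lemmas -/

theorem subst_var (σ : V → Tm F W) (x : V) : (Tm.var x).subst σ = σ x := by rw [subst]

theorem subst_app (σ : V → Tm F W) (f : F) (l : List (Tm F V)) :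
    (Tm.app f l).subst σ = .app f (l.map (·.subst σ)) := by
  rw [subst]
  congr 1
  simp only [List.map_attach_eq_pmap, List.pmap_eq_map]

theorem at?_subst (σ : V → Tm F W) : ∀ (p : List ℕ) (u t : Tm F V),
    u.at? p = some t → (u.subst σ).at? p = some (t.subst σ)
  | [], u, t, h => by simp [at?] at h ⊢; simp [h]
  | i :: p, .var x, t, h => by simp [at?] at h
  | i :: p, .app f l, t, h => by
    rw [at?] at h
    rcases hi : l[i]? with _ | ti
    · simp [hi] at h
    · simp [hi] at h
      rw [subst_app, at?]
      simp only [List.getElem?_map, hi, Option.map_some]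
      exact at?_subst σ p ti t h

theorem linList_getElem? : ∀ (l : List (Tm F V)) (p : List ℕ) (j i : ℕ),
    (linList l p j)[i]? = (l[i]?).map (fun t => lin t (p ++ [j + i]))
  | [], p, j, i => by simp [linList]
  | t :: ts, p, j, 0 => by simp [linList]
  | t :: ts, p, j, (i+1) => by
    rw [linList]
    simp only [List.getElem?_cons_succ]
    rw [linList_getElem? ts p (j+1) i]
    have : j + 1 + i = j + (i + 1) := by omega
    rw [this]

/-- Embedding of terms into terms over linearized variables. -/
def emb : Tm F V → Tm F (V × List ℕ) := subst (fun x => .var (x, []))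

theorem sub_lin_at : ∀ (q : List ℕ) (u t : Tm F V) (p : List ℕ),
    u.at? q = some t → Tm.Sub (lin t (p ++ q)) (lin u p)
  | [], u, t, p, h => by
    simp [at?] at h
    subst h
    simpa using Sub.refl _
  | i :: q, .var x, t, p, h => by simp [at?] at h
  | i :: q, .app f l, t, p, h => by
    rw [at?] at h
    rcases hi : l[i]? with _ | ti
    · simp [hi] at h
    · simp only [hi] at h
      have hmem : lin ti (p ++ [i]) ∈ linList l p 0 := by
        have h2 := linList_getElem? l p 0 i
        rw [hi] at h2
        simp only [Nat.zero_add, Option.map_some] at h2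
        obtain ⟨hl, hval⟩ := List.getElem?_eq_some_iff.mp h2
        exact hval ▸ List.getElem_mem hl
      have hsub := sub_lin_at q ti t (p ++ [i]) h
      rw [show lin (Tm.app f l) p = .app f (linList l p 0) from rfl]
      refine Sub.app hmem ?_
      have e : p ++ i :: q = (p ++ [i]) ++ q := by simp
      rw [e]
      exact hsub

mutual
theorem lin_subst (γ : V → Tm F W) (t : Tm F V) (p : List ℕ) :
    (lin t p).subst (fun xq => emb (γ xq.1)) = emb (t.subst γ) := by
  cases t with
  | var x =>
    rw [show lin (Tm.var x) p = .var (x, p) from rfl, subst_var, emb, subst_var]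
  | app f l =>
    rw [show lin (Tm.app f l) p = .app f (linList l p 0) from rfl, subst_app,
      linList_subst γ l p 0, subst_app (W := W), emb, subst_app]
    simp [emb]

theorem linList_subst (γ : V → Tm F W) (l : List (Tm F V)) (p : List ℕ) (j : ℕ) :
    (linList l p j).map (·.subst (fun xq => emb (γ xq.1)))
      = l.map (fun t => emb (t.subst γ)) := by
  cases l with
  | nil => simp [linList]
  | cons t ts =>
    rw [show linList (t :: ts) p j = lin t (p ++ [j]) :: linList ts p (j+1) from rfl]
    simp only [List.map_cons]
    rw [lin_subst γ t (p ++ [j]), linList_subst γ ts p (j + 1)]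
end

end Tm

variable {F V : Type}

/-- Plain one-step rewriting with the rewrite system `R` (rules instantiated by
substitutions, closure under contexts). -/
inductive Rw (R : Set (Tm F V × Tm F V)) : Tm F V → Tm F V → Prop
  | rule {l r} (σ : V → Tm F V) : (l, r) ∈ R →
      Rw R (l.subst σ) (r.subst σ)
  | app (f : F) (pre post : List (Tm F V)) {s t} :
      Rw R s t → Rw R (.app f (pre ++ s :: post)) (.app f (pre ++ t :: post))

/-- `Shape rel l u v`: `u` rewrites to `v` (by `rel`-derivations) using steps
occurring only strictly below the non-variable positions of the pattern `l`,
i.e. `u` and `v` coincide with `l` at its non-variable positions and at each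
variable position of `l` the subterm of `u` rewrites to that of `v`. -/
inductive Shape (rel : Tm F V → Tm F V → Prop) : Tm F V → Tm F V → Tm F V → Prop
  | var (x : V) {u v : Tm F V} : Relation.ReflTransGen rel u v → Shape rel (.var x) u v
  | app (f : F) (ls us vs : List (Tm F V)) :
      ls.length = us.length → us.length = vs.length →
      (∀ i (h1 : i < ls.length) (h2 : i < us.length) (h3 : i < vs.length),
        Shape rel ls[i] us[i] vs[i]) →
      Shape rel (.app f ls) (.app f us) (.app f vs)

/-- Sub-rewriting: `u` sub-rewrites to `v` at some position `p` with rule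
`l → r` if `u` rewrites (strictly below `p·FPos(l)`) to `u[lθ]_p` and
`v = u[rθ]_p`. -/
inductive SubRw (R : Set (Tm F V × Tm F V)) : Tm F V → Tm F V → Prop
  | rule {l r u} (σ : V → Tm F V) : (l, r) ∈ R →
      Shape (Rw R) l u (l.subst σ) → SubRw R u (r.subst σ)
  | app (f : F) (pre post : List (Tm F V)) {s t} :
      SubRw R s t → SubRw R (.app f (pre ++ s :: post)) (.app f (pre ++ t :: post))

/-- `v` is overlap-free (OF): no non-variable subterm of the linearization of
`v` unifies with a (variable-disjoint) linearized left-hand side of `R`. -/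
def OF (R : Set (Tm F V × Tm F V)) (v : Tm F V) : Prop :=
  ∀ g d, (g, d) ∈ R → ∀ s, Tm.Sub s (Tm.lin v []) → s.NonVar →
    ∀ σ τ : V × List ℕ → Tm F (V × List ℕ), s.subst σ ≠ (Tm.lin g []).subst τ


theorem shape_lin_subst {rel : Tm F V → Tm F V → Prop} :
    ∀ {l w v : Tm F V}, Shape rel l w v →
      ∀ (p : List ℕ) (τ : V × List ℕ → Tm F (V × List ℕ)),
      (∀ x q t, l.at? q = some (.var x) → w.at? q = some t → τ (x, p ++ q) = Tm.emb t) →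
      (Tm.lin l p).subst τ = Tm.emb w := by
  intro l w v h
  induction h with
  | @var x w' v' hrw =>
    intro p τ hτ
    have key := hτ x [] w' (by rw [Tm.at?]) (by rw [Tm.at?])
    rw [show Tm.lin (.var x) p = .var (x, p) from rfl, Tm.subst_var]
    simpa using key
  | app f ls us vs h1 h2 hsh ih =>
    intro p τ hτ
    rw [show Tm.lin (.app f ls) p = .app f (Tm.linList ls p 0) from rfl, Tm.subst_app,
      Tm.emb, Tm.subst_app]
    congr 1
    apply List.ext_getElem?
    intro i
    simp only [List.getElem?_map, Tm.linList_getElem?, Nat.zero_add]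
    rcases hi : ls[i]? with _ | li
    · have hiu : us[i]? = none := by
        rw [List.getElem?_eq_none_iff] at hi ⊢
        omega
      simp [hiu]
    · obtain ⟨hilt, rfl⟩ := List.getElem?_eq_some_iff.mp hi
      have hilt2 : i < us.length := by omega
      have hiu : us[i]? = some us[i] := List.getElem?_eq_some_iff.mpr ⟨hilt2, rfl⟩
      simp only [hiu, Option.map_some, Option.some.injEq]
      refine ih i hilt hilt2 (by omega) (p ++ [i]) τ ?_
      intro x q t hlq hwq
      have key := hτ x (i :: q) t ?_ ?_
      · have e : p ++ i :: q = (p ++ [i]) ++ q := by simp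
        rw [← e]
        exact key
      · rw [Tm.at?, hi]
        exact hlq
      · rw [Tm.at?, hiu]
        exact hwq

/-- if `u` is an OF-term, then for every substitution `γ`, the
instance `uγ` cannot be sub-rewritten at any non-variable position
`p ∈ FPos(u)`: the subterm of `uγ` at `p` can never become a sub-rewriting
redex of any rule of `R`. -/
theorem OF_term_no_subrewriting_at_nonvariable_positions
    (R : Set (Tm F V × Tm F V)) (u : Tm F V) (hOF : OF R u)
    (γ : V → Tm F V) (p : List ℕ) (f : F) (ts : List (Tm F V))
    (hp : u.at? p = some (.app f ts)) :
    ∀ s, (u.subst γ).at? p = some s →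
      ¬ ∃ l r, (l, r) ∈ R ∧ ∃ θ : V → Tm F V, Shape (Rw R) l s (l.subst θ) := by
  intro s hs
  have hs' := Tm.at?_subst γ p u _ hp
  rw [hs] at hs'
  obtain rfl : s = (Tm.app f ts).subst γ := by
    exact Option.some_injective _ hs'
  rintro ⟨l, r, hlr, θ, hshape⟩
  have hnv : (Tm.lin (Tm.app f ts) p).NonVar := by
    intro z hz
    rw [show Tm.lin (Tm.app f ts) p = .app f (Tm.linList ts p 0) from rfl] at hz
    cases hz
  have hsub : Tm.Sub (Tm.lin (Tm.app f ts) p) (Tm.lin u []) := by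
    simpa using Tm.sub_lin_at p u _ [] hp
  refine hOF l r hlr _ hsub hnv (fun xq => Tm.emb (γ xq.1))
    (fun xq => match ((Tm.app f ts).subst γ).at? xq.2 with
      | some w => Tm.emb w | none => .var xq) ?_
  rw [Tm.lin_subst γ (Tm.app f ts) p]
  rw [shape_lin_subst hshape [] _ ?_]
  intro x q t hlq hwq
  simp only [List.nil_append, hwq]
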